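/- arXiv:2002.05206 — 3 statements merged into one kernel-verified Lean document; each statement's English description precedes it below -/
import Mathlib

section
/- For real numbers a > −1, p > 0, b with b ≤ p (so that p − b > 0 when b < p, and in particular for 0 < b < p), and a natural number n, the integral ∫_0^∞ x^a e^{−p x} L_n(b x) dx equals Γ(a+1) p^{−a−1} · ₂F₁(−n, a+1; 1; b/p), where ₂F₁ with first parameter −n is the terminating hypergeometric sum ∑_{j=0}^{n} ((−n)_j (a+1)_j / ((1)_j j!)) (b/p)^j. -/
open MeasureTheory Real Finset

/-- The classical (unnormalized) Laguerre polynomial. -/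
noncomputable def laguerre (n : ℕ) (x : ℝ) : ℝ :=
  ∑ k ∈ Finset.range (n + 1), (n.choose k : ℝ) * (-x) ^ k / (k.factorial : ℝ)

/-- Rising factorial (Pochhammer symbol) `(q)_j = q (q+1) ⋯ (q+j-1)`. -/
noncomputable def poch (q : ℝ) (j : ℕ) : ℝ :=
  ∏ i ∈ Finset.range j, (q + i)

/-! Expanding `L_n(b x)` into monomials reduces the integral to a finite sum of Gamma integrals
`∫₀^∞ x^(a+k) e^(-p x) dx = Γ(a+1+k) p^(-a-1-k) = Γ(a+1) (a+1)_k p^(-a-1) p^(-k)`; the Laguerre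
coefficient `(-1)^k C(n,k) / k!` equals `(-n)_k / ((1)_k k!)`, which turns the sum into the
terminating hypergeometric series. -/

lemma poch_succ (q : ℝ) (j : ℕ) : poch q (j + 1) = poch q j * (q + j) :=
  prod_range_succ _ j

lemma poch_eq_ascPochhammer_eval (q : ℝ) (j : ℕ) : poch q j = (ascPochhammer ℝ j).eval q := by
  induction j with
  | zero => simp [poch]
  | succ j ih => rw [poch_succ, ih, ascPochhammer_succ_eval]

lemma poch_neg_natCast (n j : ℕ) : poch (-(n : ℝ)) j = (-1) ^ j * (n.descFactorial j : ℝ) := by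
  rw [poch_eq_ascPochhammer_eval, ascPochhammer_eval_neg_eq_descPochhammer,
    descPochhammer_eval_eq_descFactorial]

lemma poch_one_eq_factorial (j : ℕ) : poch 1 j = (j.factorial : ℝ) := by
  rw [poch_eq_ascPochhammer_eval, ascPochhammer_eval_one]

lemma Gamma_add_natCast {s : ℝ} (hs : 0 < s) (k : ℕ) :
    Gamma (s + k) = Gamma s * poch s k := by
  induction k with
  | zero => simp [poch]
  | succ k ih =>
    rw [Nat.cast_succ, ← add_assoc, Gamma_add_one (by positivity), ih, poch_succ]
    ring

lemma laguerre_mul_eq_sum (n : ℕ) (b x : ℝ) :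
    laguerre n (b * x) =
      ∑ k ∈ range (n + 1), (n.choose k : ℝ) * (-b) ^ k / k.factorial * x ^ k := by
  refine sum_congr rfl fun k _ => ?_
  rw [neg_mul_eq_neg_mul, mul_pow]
  ring

lemma integrableOn_rpow_mul_exp_neg_mul {s p : ℝ} (hs : -1 < s) (hp : 0 < p) :
    IntegrableOn (fun x : ℝ => x ^ s * exp (-p * x)) (Set.Ioi 0) := by
  simpa using integrableOn_rpow_mul_exp_neg_mul_rpow hs one_pos hp

lemma integral_rpow_add_natCast_mul_exp_neg_mul {a p : ℝ} (ha : -1 < a) (hp : 0 < p) (k : ℕ) :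
    ∫ x in Set.Ioi (0 : ℝ), x ^ (a + k) * exp (-p * x) =
      Gamma (a + 1) * p ^ (-a - 1) * (poch (a + 1) k / p ^ k) := by
  have ha1 : 0 < a + 1 := by linarith
  have h := integral_rpow_mul_exp_neg_mul_Ioi (add_pos_of_pos_of_nonneg ha1 k.cast_nonneg) hp
  simp only [← neg_mul] at h
  rw [show a + k = a + 1 + k - 1 by ring, h, Gamma_add_natCast ha1, one_div, inv_rpow hp.le,
    ← rpow_neg hp.le, neg_add, rpow_add hp, rpow_neg hp.le (k : ℝ), rpow_natCast, neg_add',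
    sub_eq_add_neg]
  ring

theorem stmt3_general (a p b : ℝ) (n : ℕ) (ha : -1 < a) (hp : 0 < p) :
    ∫ x in Set.Ioi (0 : ℝ), x ^ a * Real.exp (-p * x) * laguerre n (b * x) =
      Real.Gamma (a + 1) * p ^ (-a - 1) *
        ∑ j ∈ Finset.range (n + 1),
          poch (-(n : ℝ)) j * poch (a + 1) j / (poch 1 j * (j.factorial : ℝ)) * (b / p) ^ j := by
  have hexpand : ∀ x ∈ Set.Ioi (0 : ℝ), x ^ a * exp (-p * x) * laguerre n (b * x) =
      ∑ k ∈ range (n + 1),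
        (n.choose k : ℝ) * (-b) ^ k / k.factorial * (x ^ (a + k) * exp (-p * x)) := by
    intro x hx
    rw [laguerre_mul_eq_sum, mul_sum]
    refine sum_congr rfl fun k _ => ?_
    rw [rpow_add hx, rpow_natCast]
    ring
  have hint : ∀ k ∈ range (n + 1),
      IntegrableOn (fun x => (n.choose k : ℝ) * (-b) ^ k / k.factorial *
        (x ^ (a + k) * exp (-p * x))) (Set.Ioi 0) := fun k _ =>
    (integrableOn_rpow_mul_exp_neg_mul (by linarith [k.cast_nonneg (α := ℝ)]) hp).const_mul _
  rw [setIntegral_congr_fun measurableSet_Ioi hexpand, integral_finsetSum _ hint, mul_sum]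
  refine sum_congr rfl fun k _ => ?_
  rw [integral_const_mul, integral_rpow_add_natCast_mul_exp_neg_mul ha hp, poch_neg_natCast,
    poch_one_eq_factorial, Nat.descFactorial_eq_factorial_mul_choose, div_pow, neg_pow b]
  push_cast
  field_simp

theorem stmt3 (a p b : ℝ) (n : ℕ) (ha : -1 < a) (hp : 0 < p) (hb : b ≤ p) :
    ∫ x in Set.Ioi (0 : ℝ), x ^ a * Real.exp (-p * x) * laguerre n (b * x) =
      Real.Gamma (a + 1) * p ^ (-a - 1) *
        ∑ j ∈ Finset.range (n + 1),
          poch (-(n : ℝ)) j * poch (a + 1) j / (poch 1 j * (j.factorial : ℝ)) * (b / p) ^ j :=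
  stmt3_general a p b n ha hp
end

section
/- For an exponentially distributed random variable γ with mean m > 0 (PDF f(x) = (1/m) e^{−x/m} on x ≥ 0), and parameters τ > 1, mB > 0, the expectation E[γ(k+1, (τ γ_E + τ − 1)/mB)] (lower incomplete gamma of the shifted-scaled exponential variable, for natural k) equals k! − k! e^{−(τ−1)/mB} ∑_{q=0}^{k} (1/q!) (1/mB)^q ∑_{a=0}^{q} binom(q,a) (τ−1)^{q−a} τ^a (1/m + τ/mB)^{−1−a} (1/m) Γ(1+a). -/
open MeasureTheory Real Finset

/-- The lower incomplete gamma function `γ(s, x) = ∫_0^x t^{s-1} e^{-t} dt`. -/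
noncomputable def lowerGamma (s x : ℝ) : ℝ :=
  ∫ t in (0:ℝ)..x, t ^ (s - 1) * Real.exp (-t)

/-!
For natural `k`, `γ(k + 1, y) = k! (1 - e^{-y} ∑_{q ≤ k} y^q / q!)`, as differentiating the right
side shows. With `y = (τ x + τ - 1) / mB`, the integrand against the exponential density is
therefore `k!` times that density minus a finite combination of `(τ x + τ - 1)^q e^{-c x}` with
`c = 1/m + τ/mB`; expanding binomially reduces everything to `∫_0^∞ x^a e^{-c x} = Γ(1 + a) / c^{a+1}`.
-/

open Set Nat

theorem hasDerivAt_sum_range_pow_div_factorial (k : ℕ) (y : ℝ) :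
    HasDerivAt (fun y : ℝ => ∑ q ∈ range (k + 1), y ^ q / (q ! : ℝ))
      (∑ q ∈ range k, y ^ q / (q ! : ℝ)) y := by
  induction k with
  | zero => simpa using hasDerivAt_const y (1 : ℝ)
  | succ k ih =>
    have hlast : HasDerivAt (fun y : ℝ => y ^ (k + 1) / ((k + 1)! : ℝ)) (y ^ k / (k ! : ℝ)) y := by
      refine ((hasDerivAt_pow (k + 1) y).div_const ((k + 1)! : ℝ)).congr_deriv ?_
      rw [factorial_succ]
      push_cast
      field_simp
    rw [sum_range_succ]
    exact (ih.fun_add hlast).congr_of_eventuallyEq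
      (Filter.Eventually.of_forall fun y => sum_range_succ _ (k + 1))

theorem lowerGamma_natCast_add_one (k : ℕ) (y : ℝ) :
    lowerGamma (k + 1) y =
      (k ! : ℝ) - k ! * (exp (-y) * ∑ q ∈ range (k + 1), y ^ q / (q ! : ℝ)) := by
  have hderiv : ∀ t : ℝ, HasDerivAt
      (fun y : ℝ => -(k ! * (exp (-y) * ∑ q ∈ range (k + 1), y ^ q / (q ! : ℝ))))
      (t ^ (((k : ℝ) + 1) - 1) * exp (-t)) t := by
    intro t
    have hexp : HasDerivAt (fun y : ℝ => exp (-y)) (-exp (-t)) t := by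
      simpa using (hasDerivAt_neg t).exp
    refine ((hexp.mul (hasDerivAt_sum_range_pow_div_factorial k t)).const_mul
      (k ! : ℝ)).neg.congr_deriv ?_
    rw [add_sub_cancel_right, rpow_natCast, sum_range_succ]
    field_simp
    ring
  have hcont : Continuous fun t : ℝ => t ^ (((k : ℝ) + 1) - 1) * exp (-t) := by
    simp_rw [add_sub_cancel_right, rpow_natCast]
    fun_prop
  rw [lowerGamma, intervalIntegral.integral_eq_sub_of_hasDerivAt (fun t _ => hderiv t)
    (hcont.intervalIntegrable 0 y)]
  simp [sum_range_succ']
  ring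

theorem integrableOn_pow_mul_exp_neg_mul_Ioi (a : ℕ) {c : ℝ} (hc : 0 < c) :
    IntegrableOn (fun x : ℝ => x ^ a * exp (-(c * x))) (Ioi 0) :=
  (integrableOn_rpow_mul_exp_neg_mul_rpow (s := a) (by linarith [a.cast_nonneg (α := ℝ)])
    one_pos hc).congr_fun (fun x _ => by simp [rpow_natCast, neg_mul]) measurableSet_Ioi

theorem integral_pow_mul_exp_neg_mul_Ioi (a : ℕ) {c : ℝ} (hc : 0 < c) :
    ∫ x in Ioi 0, x ^ a * exp (-(c * x)) = (c ^ (a + 1))⁻¹ * Gamma (1 + a) := by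
  have h := integral_rpow_mul_exp_neg_mul_Ioi (a := a + 1) (by positivity) hc
  rw [add_sub_cancel_right] at h
  simp_rw [rpow_natCast] at h
  rw [h, add_comm 1 (a : ℝ), ← Nat.cast_add_one, rpow_natCast, one_div, inv_pow]

theorem integral_one_div_mul_exp_neg_div_Ioi {m : ℝ} (hm : 0 < m) :
    ∫ x in Ioi 0, (1 / m) * exp (-x / m) = 1 := by
  have hlin : (fun x : ℝ => exp (-x / m)) = fun x => exp (-m⁻¹ * x) := by
    funext x
    ring_nf
  rw [integral_const_mul, hlin, integral_exp_mul_Ioi (by simpa using hm)]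
  field_simp
  simp

theorem add_pow_mul_eq_sum_choose (q : ℕ) (u v x w : ℝ) :
    (u * x + v) ^ q * w =
      ∑ a ∈ range (q + 1), (q.choose a : ℝ) * v ^ (q - a) * u ^ a * (x ^ a * w) := by
  rw [add_pow, sum_mul]
  refine sum_congr rfl fun a _ => ?_
  ring

theorem integrableOn_affine_pow_mul_exp_neg_mul_Ioi (q : ℕ) (u v : ℝ) {c : ℝ} (hc : 0 < c) :
    IntegrableOn (fun x : ℝ => (u * x + v) ^ q * exp (-(c * x))) (Ioi 0) := by
  simp_rw [add_pow_mul_eq_sum_choose]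
  exact integrable_finsetSum _ fun a _ => (integrableOn_pow_mul_exp_neg_mul_Ioi a hc).const_mul _

theorem integral_affine_pow_mul_exp_neg_mul_Ioi (q : ℕ) (u v : ℝ) {c : ℝ} (hc : 0 < c) :
    ∫ x in Ioi 0, (u * x + v) ^ q * exp (-(c * x)) =
      ∑ a ∈ range (q + 1),
        (q.choose a : ℝ) * v ^ (q - a) * u ^ a * ((c ^ (a + 1))⁻¹ * Gamma (1 + a)) := by
  simp_rw [add_pow_mul_eq_sum_choose]
  rw [integral_finsetSum _ fun a _ => (integrableOn_pow_mul_exp_neg_mul_Ioi a hc).const_mul _]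
  simp_rw [integral_const_mul, integral_pow_mul_exp_neg_mul_Ioi _ hc]

theorem lowerGamma_affine_mul_exp_eq_sum (k : ℕ) {m mB : ℝ} (hm : m ≠ 0) (hmB : mB ≠ 0)
    (τ x : ℝ) :
    lowerGamma (k + 1) ((τ * x + τ - 1) / mB) * ((1 / m) * exp (-x / m)) =
      k ! * ((1 / m) * exp (-x / m)) -
        ∑ q ∈ range (k + 1), k ! * exp (-(τ - 1) / mB) * (1 / (q ! : ℝ)) * (1 / mB) ^ q *
          (1 / m) * ((τ * x + (τ - 1)) ^ q * exp (-((1 / m + τ / mB) * x))) := by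
  have hexp : exp (-((τ * x + τ - 1) / mB)) * exp (-x / m) =
      exp (-(τ - 1) / mB) * exp (-((1 / m + τ / mB) * x)) := by
    rw [← exp_add, ← exp_add]
    congr 1
    field_simp
    ring
  have hpow : ∀ q : ℕ, ((τ * x + τ - 1) / mB) ^ q = (1 / mB) ^ q * (τ * x + (τ - 1)) ^ q := by
    intro q
    rw [← mul_pow]
    ring
  rw [lowerGamma_natCast_add_one, sub_mul, mul_sum, mul_sum, sum_mul]
  congr 1
  refine sum_congr rfl fun q _ => ?_
  rw [hpow]
  linear_combination (k ! : ℝ) * (1 / (q ! : ℝ)) * (1 / mB) ^ q * (1 / m) *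
    (τ * x + (τ - 1)) ^ q * hexp

theorem stmt7 (k : ℕ) (m mB τ : ℝ) (hm : 0 < m) (hmB : 0 < mB) (hτ : 1 < τ) :
    ∫ x in Set.Ioi (0 : ℝ),
        lowerGamma (k + 1) ((τ * x + τ - 1) / mB) * ((1 / m) * Real.exp (-x / m)) =
      (k.factorial : ℝ) -
        (k.factorial : ℝ) * Real.exp (-(τ - 1) / mB) *
          ∑ q ∈ Finset.range (k + 1), (1 / (q.factorial : ℝ)) * (1 / mB) ^ q *
            ∑ a ∈ Finset.range (q + 1),
              (q.choose a : ℝ) * (τ - 1) ^ (q - a) * τ ^ a *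
                ((1 / m + τ / mB) ^ (a + 1))⁻¹ * (1 / m) * Real.Gamma (1 + a) := by
  have hc : 0 < 1 / m + τ / mB := by positivity
  have hdensity := integral_one_div_mul_exp_neg_div_Ioi hm
  have hterm := fun q : ℕ => (integrableOn_affine_pow_mul_exp_neg_mul_Ioi q τ (τ - 1) hc).const_mul
    (k ! * exp (-(τ - 1) / mB) * (1 / (q ! : ℝ)) * (1 / mB) ^ q * (1 / m))
  have hfirst : IntegrableOn (fun x : ℝ => (k ! : ℝ) * ((1 / m) * exp (-x / m))) (Ioi 0) :=
    (Integrable.of_integral_ne_zero (by rw [hdensity]; exact one_ne_zero)).const_mul _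
  simp_rw [lowerGamma_affine_mul_exp_eq_sum k hm.ne' hmB.ne']
  rw [integral_sub hfirst (integrable_finsetSum _ fun q _ => hterm q),
    integral_finsetSum _ fun q _ => hterm q, integral_const_mul, hdensity, mul_one, mul_sum]
  simp_rw [integral_const_mul, integral_affine_pow_mul_exp_neg_mul_Ioi _ _ _ hc, mul_sum]
  congr 1
  exact sum_congr rfl fun q _ => sum_congr rfl fun a _ => by ring
end

section
/- For independent exponentials γ_B ∼ Exp(ḡ_B), γ_E ∼ Exp(ḡ_E) and fixed ḡ_E, τ > 1, as ḡ_B → ∞ the secrecy outage probability satisfies SOP · ḡ_B → τ ḡ_E + (τ − 1); in particular the secrecy diversity order is 1 and the array gain is (τ ḡ_E + τ − 1)^{−1}. -/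
/-!
With `a = τ ḡ_E` and `b = τ - 1`, for large `g` (away from `g = -a`)
`g · SOP(g) = g (1 - e^{-b/g}) + a · g/(g + a) · e^{-b/g}`.
The first term tends to `b`, being a difference quotient of `t ↦ -e^{-b t}` at `0` taken at
`t = 1/g`; the second tends to `a`.
-/

open MeasureTheory Real Filter Topology

/-- Closed-form secrecy outage probability for the Rayleigh/Rayleigh wiretap channel,
as a function of Bob's average SNR `gB`. -/
noncomputable def raylSOP (τ gE gB : ℝ) : ℝ :=
  1 - (gB / (gB + τ * gE)) * Real.exp (-(τ - 1) / gB)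

theorem tendsto_mul_one_sub_exp_neg_div_atTop (b : ℝ) :
    Tendsto (fun x : ℝ => x * (1 - exp (-b / x))) atTop (𝓝 b) := by
  have hderiv : HasDerivAt (fun t : ℝ => -exp (-b * t)) b 0 := by
    simpa using (((hasDerivAt_id' (0 : ℝ)).const_mul (-b)).exp).fun_neg
  refine (hderiv.tendsto_slope_zero_right.comp tendsto_inv_atTop_nhdsGT_zero).congr fun x => ?_
  simp only [Function.comp_apply, inv_inv, smul_eq_mul, zero_add, mul_zero, exp_zero,
    div_eq_mul_inv]
  ring

theorem tendsto_div_add_const_atTop (a : ℝ) :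
    Tendsto (fun x : ℝ => x / (x + a)) atTop (𝓝 1) := by
  have h : Tendsto (fun x : ℝ => 1 - a / (x + a)) atTop (𝓝 (1 - 0)) :=
    tendsto_const_nhds.sub
      (tendsto_const_nhds.div_atTop (tendsto_atTop_add_const_right _ a tendsto_id))
  rw [sub_zero] at h
  refine h.congr' ?_
  filter_upwards [eventually_ne_atTop (-a)] with x hx
  have : x + a ≠ 0 := by contrapose! hx; linarith
  field_simp
  ring

theorem tendsto_exp_neg_div_atTop (b : ℝ) : Tendsto (fun x : ℝ => exp (-b / x)) atTop (𝓝 1) := by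
  simpa [Function.comp_def] using
    (continuous_exp.tendsto 0).comp (tendsto_const_nhds.div_atTop tendsto_id)

theorem raylSOP_mul_eq {τ gE gB : ℝ} (h : gB + τ * gE ≠ 0) :
    raylSOP τ gE gB * gB =
      gB * (1 - exp (-(τ - 1) / gB)) + τ * gE * (gB / (gB + τ * gE)) * exp (-(τ - 1) / gB) := by
  unfold raylSOP
  field_simp
  ring

theorem stmt10_general (τ gE : ℝ) :
    Filter.Tendsto (fun gB : ℝ => raylSOP τ gE gB * gB) Filter.atTop
      (nhds (τ * gE + (τ - 1))) := by
  have hlim := (tendsto_mul_one_sub_exp_neg_div_atTop (τ - 1)).add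
    (((tendsto_div_add_const_atTop (τ * gE)).const_mul (τ * gE)).mul
      (tendsto_exp_neg_div_atTop (τ - 1)))
  rw [mul_one, mul_one, add_comm] at hlim
  refine hlim.congr' ?_
  filter_upwards [eventually_ne_atTop (-(τ * gE))] with gB hgB
  exact (raylSOP_mul_eq (by contrapose! hgB; linarith)).symm

theorem stmt10 (τ gE : ℝ) (hτ : 1 < τ) (hgE : 0 < gE) :
    Filter.Tendsto (fun gB : ℝ => raylSOP τ gE gB * gB) Filter.atTop
      (nhds (τ * gE + (τ - 1))) :=
  stmt10_general τ gE
end
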